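/- arXiv:1209.2236 — 3 statements merged into one kernel-verified Lean document; each statement's English description precedes it below -/
import Mathlib

section
/- For every α ∈ (0,2) and every θ ∈ ℝ, ∫_0^∞ (1 − cos(θ C_α^{1/α} x^{−1/α})) dx = |θ|^α, equivalently 2 ∫_0^∞ sin²(½ θ C_α^{1/α} x^{−1/α}) dx = |θ|^α. -/
open MeasureTheory Filter Set

/-- `levyC u = (∫_0^∞ x^{-u} sin x dx)⁻¹`, where the integral is understood as the improper
limit of `∫_0^R x^{-u} sin x dx` as `R → ∞`. -/
noncomputable def levyC (u : ℝ) : ℝ :=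
  (limUnder atTop (fun R : ℝ => ∫ x in (0:ℝ)..R, x ^ (-u) * Real.sin x))⁻¹

/-!
Integrating by parts against the primitive `x^{-α}(1 - cos x)` of
`x^{-α} sin x - α x^{-α-1}(1 - cos x)`, which is continuous at `0` because `1 - cos x ≤ x²/2`,
gives `∫_0^R x^{-α} sin x dx = α ∫_0^R x^{-α-1}(1 - cos x) dx + R^{-α}(1 - cos R)`.
Hence `C_α = (α K_α)⁻¹` with `K_α = ∫_0^∞ x^{-α-1}(1 - cos x) dx`, an absolutely convergent
positive integral for `α ∈ (0,2)`. The substitution `x = y^{-α}` followed by the scaling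
`y ↦ b y` gives `∫_0^∞ (1 - cos(b x^{-1/α})) dx = α |b|^α K_α`, which is `|θ|^α` for
`b = θ C_α^{1/α}`; the `sin²` form is the same integral by `1 - cos z = 2 sin²(z/2)`.
-/

open Real Topology

lemma one_sub_cos_nonneg (x : ℝ) : 0 ≤ 1 - cos x := sub_nonneg.2 (cos_le_one x)

lemma one_sub_cos_le_two (x : ℝ) : 1 - cos x ≤ 2 := by linarith [neg_one_le_cos x]

lemma two_mul_sin_sq_half (x : ℝ) : 2 * sin (x / 2) ^ 2 = 1 - cos x := by
  rw [← mul_div_cancel₀ x two_ne_zero, cos_two_mul_eq_one_sub,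
    mul_div_cancel_left₀ _ two_ne_zero]
  ring

section RpowMulOneSubCos

variable {p x : ℝ}

lemma rpow_mul_one_sub_cos_le (p : ℝ) (hx : 0 < x) : x ^ p * (1 - cos x) ≤ x ^ (p + 2) / 2 := by
  calc x ^ p * (1 - cos x) ≤ x ^ p * (x ^ 2 / 2) := by
        gcongr; linarith [one_sub_sq_div_two_le_cos (x := x)]
    _ = x ^ (p + 2) / 2 := by rw [rpow_add hx, rpow_two]; ring

lemma integrableOn_rpow_mul_one_sub_cos (hp₃ : -3 < p) (hp₁ : p < -1) :
    IntegrableOn (fun x ↦ x ^ p * (1 - cos x)) (Ioi 0) := by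
  have hmeas : AEStronglyMeasurable (fun x : ℝ ↦ x ^ p * (1 - cos x)) := by
    fun_prop
  rw [← Ioc_union_Ioi_eq_Ioi zero_le_one]
  refine IntegrableOn.union ?_ ?_
  · have hdom : IntegrableOn (fun x : ℝ ↦ x ^ (p + 2) / 2) (Ioc 0 1) :=
      ((intervalIntegral.intervalIntegrable_rpow' (by linarith)).div_const 2).1
    refine hdom.mono' hmeas.restrict ?_
    filter_upwards [ae_restrict_mem measurableSet_Ioc] with x hx
    rw [norm_of_nonneg (mul_nonneg (rpow_nonneg hx.1.le _) (one_sub_cos_nonneg x))]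
    exact rpow_mul_one_sub_cos_le p hx.1
  · have hdom : IntegrableOn (fun x : ℝ ↦ x ^ p * 2) (Ioi 1) :=
      (integrableOn_Ioi_rpow_of_lt hp₁ one_pos).mul_const 2
    refine hdom.mono' hmeas.restrict ?_
    filter_upwards [ae_restrict_mem measurableSet_Ioi] with x (hx : 1 < x)
    have hx₀ : 0 ≤ x ^ p := rpow_nonneg (by linarith) _
    rw [norm_of_nonneg (mul_nonneg hx₀ (one_sub_cos_nonneg x))]
    exact mul_le_mul_of_nonneg_left (one_sub_cos_le_two x) hx₀

lemma integral_rpow_mul_one_sub_cos_pos (hp₃ : -3 < p) (hp₁ : p < -1) :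
    0 < ∫ x in Ioi 0, x ^ p * (1 - cos x) := by
  have hnonneg : 0 ≤ᵐ[volume.restrict (Ioi 0)] fun x : ℝ ↦ x ^ p * (1 - cos x) := by
    filter_upwards [ae_restrict_mem measurableSet_Ioi] with x (hx : 0 < x)
    exact mul_nonneg (rpow_nonneg hx.le _) (one_sub_cos_nonneg x)
  rw [setIntegral_pos_iff_support_of_nonneg_ae hnonneg
    (integrableOn_rpow_mul_one_sub_cos hp₃ hp₁)]
  have hsupp :
      Ioo 0 (2 * π) ⊆ Function.support (fun x : ℝ ↦ x ^ p * (1 - cos x)) ∩ Ioi 0 := by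
    intro x ⟨hx₀, hx₂π⟩
    have hcos : cos x ≠ 1 := by
      rw [Ne, cos_eq_one_iff_of_lt_of_lt (by linarith [pi_pos]) hx₂π]
      exact hx₀.ne'
    exact ⟨mul_ne_zero (rpow_pos_of_pos hx₀ p).ne' (sub_ne_zero.2 hcos.symm), hx₀⟩
  refine lt_of_lt_of_le ?_ (measure_mono hsupp)
  simp [pi_pos]

lemma continuousOn_rpow_mul_one_sub_cos (hp : -2 < p) :
    ContinuousOn (fun x ↦ x ^ p * (1 - cos x)) (Ici 0) := by
  intro x (hx : 0 ≤ x)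
  rcases hx.eq_or_lt with rfl | hx
  · rw [← continuousWithinAt_Ioi_iff_Ici, ContinuousWithinAt]
    have hbound : Tendsto (fun x : ℝ ↦ x ^ (p + 2) / 2) (𝓝[>] 0) (𝓝 0) := by
      have := ((continuousAt_rpow_const 0 (p + 2) (Or.inr (by linarith))).tendsto.div_const 2)
      rw [zero_rpow (by linarith), zero_div] at this
      exact this.mono_left nhdsWithin_le_nhds
    simp only [cos_zero, sub_self, mul_zero]
    refine squeeze_zero' ?_ ?_ hbound
    · filter_upwards [self_mem_nhdsWithin] with x (hx : 0 < x)
      exact mul_nonneg (rpow_nonneg hx.le _) (one_sub_cos_nonneg x)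
    · filter_upwards [self_mem_nhdsWithin] with x (hx : 0 < x)
      exact rpow_mul_one_sub_cos_le p hx
  · exact ((continuousAt_rpow_const x p (Or.inl hx.ne')).mul
      (continuous_const.sub continuous_cos).continuousAt).continuousWithinAt

lemma hasDerivAt_rpow_mul_one_sub_cos (hx : 0 < x) :
    HasDerivAt (fun x ↦ x ^ p * (1 - cos x))
      (p * x ^ (p - 1) * (1 - cos x) + x ^ p * sin x) x := by
  simpa using (hasDerivAt_rpow_const (p := p) (Or.inl hx.ne')).fun_mul
    ((hasDerivAt_cos x).const_sub 1)

lemma integrableOn_rpow_mul_sin (hp : -2 < p) (R : ℝ) :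
    IntegrableOn (fun x ↦ x ^ p * sin x) (Ioc 0 R) := by
  have hdom : IntegrableOn (fun x : ℝ ↦ x ^ (p + 1)) (Ioc 0 R) :=
    (intervalIntegral.intervalIntegrable_rpow' (by linarith)).1
  refine hdom.mono' (by fun_prop) ?_
  filter_upwards [ae_restrict_mem measurableSet_Ioc] with x hx
  rw [norm_mul, norm_of_nonneg (rpow_nonneg hx.1.le _), rpow_add_one hx.1.ne']
  exact mul_le_mul_of_nonneg_left ((abs_sin_le_abs).trans_eq (abs_of_pos hx.1))
    (rpow_nonneg hx.1.le _)

end RpowMulOneSubCos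

section SineIntegral

variable {a : ℝ}

lemma integral_rpow_neg_mul_sin (ha : a ∈ Ioo 0 2) {R : ℝ} (hR : 0 ≤ R) :
    ∫ x in 0..R, x ^ (-a) * sin x
      = a * (∫ x in 0..R, x ^ (-a - 1) * (1 - cos x)) + R ^ (-a) * (1 - cos R) := by
  have hcos : IntervalIntegrable (fun x ↦ -a * x ^ (-a - 1) * (1 - cos x)) volume 0 R := by
    refine (intervalIntegrable_iff_integrableOn_Ioc_of_le hR).2 ?_
    simpa only [IntegrableOn, mul_assoc] using ((integrableOn_rpow_mul_one_sub_cos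
      (by linarith [ha.2]) (by linarith [ha.1])).mono_set Ioc_subset_Ioi_self).const_mul (-a)
  have hsin : IntervalIntegrable (fun x ↦ x ^ (-a) * sin x) volume 0 R :=
    (intervalIntegrable_iff_integrableOn_Ioc_of_le hR).2
      (integrableOn_rpow_mul_sin (by linarith [ha.2]) R)
  have hftc := intervalIntegral.integral_eq_sub_of_hasDerivAt_of_le hR
    ((continuousOn_rpow_mul_one_sub_cos (by linarith [ha.2])).mono Icc_subset_Ici_self)
    (fun x hx ↦ hasDerivAt_rpow_mul_one_sub_cos hx.1) (hcos.add hsin)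
  rw [intervalIntegral.integral_add hcos hsin] at hftc
  simp only [mul_assoc, intervalIntegral.integral_const_mul, cos_zero, sub_self,
    mul_zero, sub_zero] at hftc
  linarith

lemma tendsto_integral_rpow_neg_mul_sin (ha : a ∈ Ioo 0 2) :
    Tendsto (fun R ↦ ∫ x in 0..R, x ^ (-a) * sin x) atTop
      (𝓝 (a * ∫ x in Ioi 0, x ^ (-a - 1) * (1 - cos x))) := by
  have hmain : Tendsto (fun R ↦ a * ∫ x in 0..R, x ^ (-a - 1) * (1 - cos x)) atTop
      (𝓝 (a * ∫ x in Ioi 0, x ^ (-a - 1) * (1 - cos x))) :=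
    (intervalIntegral_tendsto_integral_Ioi 0 (integrableOn_rpow_mul_one_sub_cos
      (by linarith [ha.2]) (by linarith [ha.1])) tendsto_id).const_mul a
  have hboundary : Tendsto (fun R : ℝ ↦ R ^ (-a) * (1 - cos R)) atTop (𝓝 0) := by
    refine squeeze_zero' ?_ ?_ (by simpa using (tendsto_rpow_neg_atTop ha.1).mul_const 2)
    · filter_upwards [eventually_ge_atTop 0] with R hR
      exact mul_nonneg (rpow_nonneg hR _) (one_sub_cos_nonneg R)
    · filter_upwards [eventually_ge_atTop 0] with R hR
      exact mul_le_mul_of_nonneg_left (one_sub_cos_le_two R) (rpow_nonneg hR _)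
  have hsum := hmain.add hboundary
  rw [add_zero] at hsum
  refine hsum.congr' ?_
  filter_upwards [eventually_ge_atTop 0] with R hR
  exact (integral_rpow_neg_mul_sin ha hR).symm

lemma levyC_eq (ha : a ∈ Ioo 0 2) :
    levyC a = (a * ∫ x in Ioi 0, x ^ (-a - 1) * (1 - cos x))⁻¹ := by
  rw [levyC, (tendsto_integral_rpow_neg_mul_sin ha).limUnder_eq]

end SineIntegral

section Substitution

variable {E : Type*} [NormedAddCommGroup E] [NormedSpace ℝ E]

lemma integral_comp_rpow_neg_inv_Ioi (g : ℝ → E) {a : ℝ} (ha : 0 < a) :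
    ∫ y in Ioi 0, g (y ^ (-a⁻¹)) = a • ∫ x in Ioi 0, x ^ (-a - 1) • g x := by
  rw [← integral_comp_rpow_Ioi _ (neg_ne_zero.2 ha.ne'), ← integral_smul]
  refine setIntegral_congr_fun measurableSet_Ioi fun x (hx : 0 < x) ↦ ?_
  rw [← rpow_mul hx.le, neg_mul_neg, mul_inv_cancel₀ ha.ne', rpow_one, abs_neg, abs_of_pos ha,
    smul_smul]

lemma integral_rpow_smul_comp_mul_left_Ioi (g : ℝ → E) (q : ℝ) {b : ℝ} (hb : 0 < b) :
    ∫ x in Ioi 0, x ^ q • g (b * x) = b ^ (-q - 1) • ∫ x in Ioi 0, x ^ q • g x := by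
  have hcomp := integral_comp_mul_left_Ioi (fun y ↦ (b⁻¹ * y) ^ q • g y) 0 hb
  simp only [inv_mul_cancel_left₀ hb.ne', mul_zero] at hcomp
  rw [hcomp, ← integral_smul, ← integral_smul]
  refine setIntegral_congr_fun measurableSet_Ioi fun x (hx : 0 < x) ↦ ?_
  rw [mul_rpow (inv_nonneg.2 hb.le) hx.le, inv_rpow hb.le, smul_smul, smul_smul, ← mul_assoc,
    ← rpow_neg hb.le, ← rpow_neg_one b, ← rpow_add hb]
  ring_nf

end Substitution

lemma integral_one_sub_cos_mul_rpow_neg_inv {a : ℝ} (ha : 0 < a) (b : ℝ) :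
    ∫ x in Ioi 0, (1 - cos (b * x ^ (-a⁻¹)))
      = a * |b| ^ a * ∫ x in Ioi 0, x ^ (-a - 1) * (1 - cos x) := by
  have hcos_abs : ∀ y, cos (b * y) = cos (|b| * y) := fun y ↦ by
    rcases abs_choice b with h | h <;> simp [h, neg_mul, cos_neg]
  simp only [hcos_abs]
  rcases (abs_nonneg b).eq_or_lt with h | hb
  · simp [← h, zero_rpow ha.ne']
  · have hscale := integral_rpow_smul_comp_mul_left_Ioi (fun x ↦ 1 - cos x) (-a - 1) hb
    rw [show -(-a - 1) - 1 = a by ring] at hscale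
    rw [integral_comp_rpow_neg_inv_Ioi (fun x ↦ 1 - cos (|b| * x)) ha]
    simp only [smul_eq_mul] at hscale ⊢
    rw [hscale, mul_assoc]

/-- for every `α ∈ (0,2)` and `θ ∈ ℝ`,
`∫_0^∞ (1 - cos(θ C_α^{1/α} x^{-1/α})) dx = |θ|^α`, equivalently
`2∫_0^∞ sin²(½ θ C_α^{1/α} x^{-1/α}) dx = |θ|^α`. -/
theorem stmt6 (a : ℝ) (ha : a ∈ Ioo (0:ℝ) 2) (θ : ℝ) :
    (∫ x in Ioi (0:ℝ), (1 - Real.cos (θ * levyC a ^ a⁻¹ * x ^ (-a⁻¹)))) = |θ| ^ a ∧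
    2 * (∫ x in Ioi (0:ℝ), Real.sin (θ * levyC a ^ a⁻¹ * x ^ (-a⁻¹) / 2) ^ 2) = |θ| ^ a := by
  have hK : 0 < ∫ x in Ioi 0, x ^ (-a - 1) * (1 - cos x) :=
    integral_rpow_mul_one_sub_cos_pos (by linarith [ha.2]) (by linarith [ha.1])
  have hC : 0 < levyC a := by
    rw [levyC_eq ha]
    exact inv_pos.2 (mul_pos ha.1 hK)
  have hcos : ∫ x in Ioi 0, (1 - cos (θ * levyC a ^ a⁻¹ * x ^ (-a⁻¹))) = |θ| ^ a := by
    rw [integral_one_sub_cos_mul_rpow_neg_inv ha.1, abs_mul, abs_of_pos (rpow_pos_of_pos hC _),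
      mul_rpow (abs_nonneg θ) (rpow_pos_of_pos hC _).le, ← rpow_mul hC.le,
      inv_mul_cancel₀ ha.1.ne', rpow_one, levyC_eq ha]
    field_simp [ha.1.ne']
  refine ⟨hcos, ?_⟩
  simpa only [← integral_const_mul, two_mul_sin_sq_half] using hcos
end

section
/- Let α : [0,1] → [c,d] ⊂ (0,2) be continuous, t ∈ [0,1] and θ ∈ ℝ. Then 2 ∫_0^1 ∫_0^∞ sin²( ½ θ C_{α(x)}^{1/α(x)} 1_{[0,t]}(x) y^{−1/α(x)} ) dy dx = ∫_0^t |θ|^{α(x)} dx. -/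
open MeasureTheory Filter Set

/-!
Integrating by parts, `∫_0^R x^{-u} sin x dx = (1 - cos R) R^{-u} + ∫_0^R u x^{-1-u} (1 - cos x) dx`,
so for `0 < u < 2` the improper integral converges to `K u = ∫_0^∞ u x^{-1-u} (1 - cos x) dx > 0`
and `C_u = 1 / K u`. On the other side, `2 sin² (z/2) = 1 - cos z`, and the substitution
`y = x^{-u}` followed by `x ↦ |b| x` gives `∫_0^∞ (1 - cos (b y^{-1/u})) dy = |b|^u K u`.
With `b = θ C_u^{1/u}` this is `|θ|^u`, so the inner integral is `|θ|^{α(x)} / 2` for `x ≤ t`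
and `0` otherwise.
-/

namespace LevyStable

open Real Topology

noncomputable def levyKernel (u x : ℝ) : ℝ := u * ((1 - cos x) * x ^ (-1 - u))

noncomputable def levyKernelIntegral (u : ℝ) : ℝ := ∫ x in Ioi 0, levyKernel u x

lemma one_sub_cos_mul_rpow_le {x : ℝ} (hx : 0 < x) (p : ℝ) :
    (1 - cos x) * x ^ p ≤ x ^ (p + 2) / 2 := by
  have := one_sub_sq_div_two_le_cos (x := x)
  calc (1 - cos x) * x ^ p ≤ x ^ 2 / 2 * x ^ p := by gcongr; linarith
    _ = x ^ (p + 2) / 2 := by rw [rpow_add hx, rpow_two]; ring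

lemma levyKernel_nonneg {u x : ℝ} (hu : 0 ≤ u) (hx : 0 ≤ x) : 0 ≤ levyKernel u x :=
  mul_nonneg hu (mul_nonneg (by linarith [cos_le_one x]) (rpow_nonneg hx _))

lemma measurable_levyKernel (u : ℝ) : Measurable (levyKernel u) := by
  unfold levyKernel; fun_prop

lemma integrableOn_levyKernel {u : ℝ} (hu : 0 < u) (hu2 : u < 2) :
    IntegrableOn (levyKernel u) (Ioi 0) := by
  rw [← Ioc_union_Ioi_eq_Ioi zero_le_one]
  refine IntegrableOn.union ?_ ?_
  · have hdom : IntegrableOn (fun x : ℝ => u * (x ^ (1 - u) / 2)) (Ioc 0 1) :=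
      (((intervalIntegral.intervalIntegrable_rpow' (a := 0) (b := 1)
        (by linarith)).1.div_const 2).const_mul u)
    refine hdom.mono' (measurable_levyKernel u).aestronglyMeasurable ?_
    filter_upwards [ae_restrict_mem measurableSet_Ioc] with x ⟨hx, _⟩
    rw [norm_of_nonneg (levyKernel_nonneg hu.le hx.le)]
    have := one_sub_cos_mul_rpow_le hx (-1 - u)
    rw [show -1 - u + 2 = 1 - u by ring] at this
    exact mul_le_mul_of_nonneg_left this hu.le
  · have hdom : IntegrableOn (fun x : ℝ => u * (2 * x ^ (-1 - u))) (Ioi 1) :=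
      ((integrableOn_Ioi_rpow_of_lt (by linarith) one_pos).const_mul 2).const_mul u
    refine hdom.mono' (measurable_levyKernel u).aestronglyMeasurable ?_
    filter_upwards [ae_restrict_mem measurableSet_Ioi] with x hx
    have hx0 : 0 < x := one_pos.trans hx
    rw [norm_of_nonneg (levyKernel_nonneg hu.le hx0.le), levyKernel]
    gcongr
    linarith [neg_one_le_cos x]

lemma levyKernelIntegral_pos {u : ℝ} (hu : 0 < u) (hu2 : u < 2) :
    0 < levyKernelIntegral u := by
  have hint := integrableOn_levyKernel hu hu2
  have hpos : 0 < ∫ x in (0:ℝ)..π, levyKernel u x := by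
    refine intervalIntegral.intervalIntegral_pos_of_pos_on ?_ ?_ pi_pos
    · rw [intervalIntegrable_iff_integrableOn_Ioc_of_le pi_pos.le]
      exact hint.mono_set Ioc_subset_Ioi_self
    · intro x ⟨hx0, hxπ⟩
      have hcos : cos x < 1 := (cos_le_one x).lt_of_ne fun h =>
        hx0.ne' ((cos_eq_one_iff_of_lt_of_lt (by linarith [pi_pos]) (by linarith)).1 h)
      exact mul_pos hu (mul_pos (by linarith) (rpow_pos_of_pos hx0 _))
  calc 0 < ∫ x in (0:ℝ)..π, levyKernel u x := hpos
    _ = ∫ x in Ioc 0 π, levyKernel u x := intervalIntegral.integral_of_le pi_pos.le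
    _ ≤ levyKernelIntegral u := by
      refine setIntegral_mono_set hint ?_ Ioc_subset_Ioi_self.eventuallyLE
      filter_upwards [ae_restrict_mem measurableSet_Ioi] with x hx
      exact levyKernel_nonneg hu.le (le_of_lt hx)

lemma intervalIntegrable_rpow_neg_mul_sin {u : ℝ} (hu2 : u < 2) {R : ℝ} (hR : 0 ≤ R) :
    IntervalIntegrable (fun x => x ^ (-u) * sin x) volume 0 R := by
  rw [intervalIntegrable_iff_integrableOn_Ioc_of_le hR]
  have hdom : IntegrableOn (fun x : ℝ => x ^ (1 - u)) (Ioc 0 R) :=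
    (intervalIntegral.intervalIntegrable_rpow' (a := 0) (b := R) (by linarith)).1
  refine hdom.mono' (by fun_prop : Measurable fun x : ℝ => x ^ (-u) * sin x).aestronglyMeasurable ?_
  filter_upwards [ae_restrict_mem measurableSet_Ioc] with x ⟨hx, _⟩
  calc ‖x ^ (-u) * sin x‖ = x ^ (-u) * |sin x| := by
        rw [norm_mul, norm_of_nonneg (rpow_nonneg hx.le _), norm_eq_abs]
    _ ≤ x ^ (-u) * x := by
        gcongr; exact abs_sin_le_abs.trans_eq (abs_of_pos hx)
    _ = x ^ (1 - u) := by
        rw [sub_eq_neg_add, rpow_add hx, rpow_one]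

lemma integral_rpow_neg_mul_sin_eq {u : ℝ} (hu : 0 < u) (hu2 : u < 2) {R : ℝ} (hR : 0 < R) :
    ∫ x in (0:ℝ)..R, x ^ (-u) * sin x
      = (1 - cos R) * R ^ (-u) + ∫ x in (0:ℝ)..R, levyKernel u x := by
  have hsin := intervalIntegrable_rpow_neg_mul_sin hu2 hR.le
  have hK : IntervalIntegrable (levyKernel u) volume 0 R := by
    rw [intervalIntegrable_iff_integrableOn_Ioc_of_le hR.le]
    exact (integrableOn_levyKernel hu hu2).mono_set Ioc_subset_Ioi_self
  set F : ℝ → ℝ := fun x => (1 - cos x) * x ^ (-u)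
  have hderiv : ∀ x ∈ Ioo 0 R, HasDerivAt F (x ^ (-u) * sin x - levyKernel u x) x := by
    intro x ⟨hx, _⟩
    refine (((hasDerivAt_cos x).const_sub 1).mul
      (hasDerivAt_rpow_const (p := -u) (Or.inl hx.ne'))).congr_deriv ?_
    rw [levyKernel, show -u - 1 = -1 - u by ring]
    ring
  have hF0 : Tendsto F (𝓝[>] 0) (𝓝 0) := by
    have hdom : Tendsto (fun x : ℝ => x ^ (-u + 2) / 2) (𝓝[>] 0) (𝓝 0) := by
      have := ((continuousAt_rpow_const 0 (-u + 2) (Or.inr (by linarith))).tendsto.div_const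
        2).mono_left (nhdsWithin_le_nhds (s := Ioi 0))
      rwa [zero_rpow (by linarith), zero_div] at this
    refine squeeze_zero' ?_ ?_ hdom <;> filter_upwards [self_mem_nhdsWithin] with x (hx : 0 < x)
    · exact mul_nonneg (by linarith [cos_le_one x]) (rpow_nonneg hx.le _)
    · exact one_sub_cos_mul_rpow_le hx (-u)
  have hFR : Tendsto F (𝓝[<] R) (𝓝 (F R)) :=
    (((continuous_const.sub continuous_cos).continuousAt).mul
      (continuousAt_rpow_const R _ (Or.inl hR.ne'))).continuousWithinAt
  have := intervalIntegral.integral_eq_sub_of_hasDerivAt_of_tendsto hR hderiv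
    (hsin.sub hK) hF0 hFR
  rw [intervalIntegral.integral_sub hsin hK] at this
  linarith

lemma tendsto_integral_rpow_neg_mul_sin {u : ℝ} (hu : 0 < u) (hu2 : u < 2) :
    Tendsto (fun R => ∫ x in (0:ℝ)..R, x ^ (-u) * sin x) atTop (𝓝 (levyKernelIntegral u)) := by
  have hboundary : Tendsto (fun R : ℝ => (1 - cos R) * R ^ (-u)) atTop (𝓝 0) := by
    have hdom : Tendsto (fun R : ℝ => 2 * R ^ (-u)) atTop (𝓝 0) := by
      simpa using (tendsto_rpow_neg_atTop hu).const_mul 2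
    refine squeeze_zero_norm' ?_ hdom
    filter_upwards [eventually_gt_atTop 0] with R hR
    rw [norm_mul, norm_of_nonneg (rpow_nonneg hR.le _), norm_eq_abs]
    gcongr
    rw [abs_le]
    constructor <;> linarith [cos_le_one R, neg_one_le_cos R]
  have hkernel := intervalIntegral_tendsto_integral_Ioi 0 (integrableOn_levyKernel hu hu2)
    tendsto_id
  refine ((zero_add (levyKernelIntegral u)) ▸ hboundary.add hkernel).congr' ?_
  filter_upwards [eventually_gt_atTop 0] with R hR
  exact (integral_rpow_neg_mul_sin_eq hu hu2 hR).symm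

lemma levyC_eq_inv {u : ℝ} (hu : 0 < u) (hu2 : u < 2) : levyC u = (levyKernelIntegral u)⁻¹ := by
  rw [levyC, (tendsto_integral_rpow_neg_mul_sin hu hu2).limUnder_eq]

lemma integral_one_sub_cos_mul_rpow {u b : ℝ} (hu : 0 < u) (hb : 0 < b) :
    ∫ y in Ioi 0, (1 - cos (b * y ^ (-u⁻¹))) = b ^ u * levyKernelIntegral u := by
  rw [← integral_comp_rpow_Ioi _ (neg_ne_zero.mpr hu.ne')]
  have hpt : ∀ x ∈ Ioi (0:ℝ), (|-u| * x ^ (-u - 1)) • (1 - cos (b * (x ^ (-u)) ^ (-u⁻¹)))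
      = b ^ (1 + u) * levyKernel u (b * x) := by
    intro x (hx : 0 < x)
    rw [← rpow_mul hx.le, neg_mul_neg, mul_inv_cancel₀ hu.ne', rpow_one, abs_neg,
      abs_of_pos hu, smul_eq_mul, levyKernel, mul_rpow hb.le hx.le, show -u - 1 = -1 - u by ring]
    have : b ^ (1 + u) * b ^ (-1 - u) = 1 := by
      rw [← rpow_add hb, show 1 + u + (-1 - u) = 0 by ring, rpow_zero]
    linear_combination (u * (cos (b * x) - 1) * x ^ (-1 - u)) * this
  rw [setIntegral_congr_fun measurableSet_Ioi hpt, integral_const_mul,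
    integral_comp_mul_left_Ioi _ _ hb, mul_zero, smul_eq_mul, ← levyKernelIntegral, ← mul_assoc,
    ← rpow_neg_one b, ← rpow_add hb, show 1 + u + -1 = u by ring]

lemma integral_sin_sq_mul_rpow {u : ℝ} (hu : 0 < u) (b : ℝ) :
    ∫ y in Ioi 0, sin (b * y ^ (-u⁻¹) / 2) ^ 2 = |b| ^ u * levyKernelIntegral u / 2 := by
  have hhalf : ∀ y : ℝ, sin (b * y ^ (-u⁻¹) / 2) ^ 2 = (1 - cos (|b| * y ^ (-u⁻¹))) / 2 := by
    intro y
    rw [sin_sq_eq_half_sub, mul_div_cancel₀ _ two_ne_zero]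
    rcases abs_choice b with hb | hb <;> simp only [hb, neg_mul, cos_neg] <;> ring
  simp_rw [hhalf]
  rw [integral_div]
  rcases (abs_nonneg b).eq_or_lt with hb | hb
  · simp [← hb, zero_rpow hu.ne']
  · rw [integral_one_sub_cos_mul_rpow hu hb]

lemma integral_sin_sq_levyC {u : ℝ} (hu : 0 < u) (hu2 : u < 2) (θ : ℝ) :
    ∫ y in Ioi 0, sin (θ * levyC u ^ u⁻¹ * y ^ (-u⁻¹) / 2) ^ 2 = |θ| ^ u / 2 := by
  have hK := levyKernelIntegral_pos hu hu2
  have hC : 0 ≤ levyC u := by rw [levyC_eq_inv hu hu2]; exact inv_nonneg.mpr hK.le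
  rw [integral_sin_sq_mul_rpow hu, abs_mul, abs_of_nonneg (rpow_nonneg hC _),
    mul_rpow (abs_nonneg θ) (rpow_nonneg hC _), ← rpow_mul hC, inv_mul_cancel₀ hu.ne',
    rpow_one, levyC_eq_inv hu hu2]
  field_simp

end LevyStable

open LevyStable

theorem stmt7_general (c d : ℝ) (hc : 0 < c) (hd2 : d < 2)
    (α : ℝ → ℝ)
    (hαmem : ∀ s ∈ Icc (0:ℝ) 1, α s ∈ Icc c d)
    (t : ℝ) (ht : t ∈ Icc (0:ℝ) 1) (θ : ℝ) :
    2 * (∫ x in (0:ℝ)..1, ∫ y in Ioi (0:ℝ),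
        Real.sin (θ * levyC (α x) ^ (α x)⁻¹ * (if x ∈ Icc (0:ℝ) t then (1:ℝ) else 0)
            * y ^ (-(α x)⁻¹) / 2) ^ 2)
      = ∫ x in (0:ℝ)..t, |θ| ^ (α x) := by
  rw [intervalIntegral.integral_congr (g := fun x => {x | x ≤ t}.indicator (|θ| ^ α ·) x / 2),
    intervalIntegral.integral_div, intervalIntegral.integral_indicator ht]
  · ring
  rw [uIcc_of_le zero_le_one]
  intro x hx
  obtain ⟨hcα, hαd⟩ := hαmem x hx
  by_cases hxt : x ≤ t
  · simp only [if_pos (show x ∈ Icc 0 t from ⟨hx.1, hxt⟩), mul_one,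
      indicator_of_mem (show x ∈ {x | x ≤ t} from hxt)]
    exact integral_sin_sq_levyC (hc.trans_le hcα) (hαd.trans_lt hd2) θ
  · simp [show x ∉ Icc 0 t from fun h => hxt h.2, hxt]

/-- for `α : [0,1] → [c,d] ⊂ (0,2)` continuous, `t ∈ [0,1]`, `θ ∈ ℝ`,
`2∫_0^1 ∫_0^∞ sin²(½ θ C_{α(x)}^{1/α(x)} 1_{[0,t]}(x) y^{-1/α(x)}) dy dx = ∫_0^t |θ|^{α(x)} dx`. -/
theorem stmt7 (c d : ℝ) (hc : 0 < c) (hcd : c ≤ d) (hd2 : d < 2)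
    (α : ℝ → ℝ) (hαcont : ContinuousOn α (Icc 0 1))
    (hαmem : ∀ s ∈ Icc (0:ℝ) 1, α s ∈ Icc c d)
    (t : ℝ) (ht : t ∈ Icc (0:ℝ) 1) (θ : ℝ) :
    2 * (∫ x in (0:ℝ)..1, ∫ y in Ioi (0:ℝ),
        Real.sin (θ * levyC (α x) ^ (α x)⁻¹ * (if x ∈ Icc (0:ℝ) t then (1:ℝ) else 0)
            * y ^ (-(α x)⁻¹) / 2) ^ 2)
      = ∫ x in (0:ℝ)..t, |θ| ^ (α x) :=
  stmt7_general c d hc hd2 α hαmem t ht θ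
end

section
/- Let 0 < c ≤ d < 2, let p ∈ (d,2), and let (Γ_i)_{i≥1} be the arrival times of a unit-rate Poisson process. Then for every integer i_0 with i_0 > p/c, each expectation E[|ln Γ_i|^p (Γ_i^{−1/c} + Γ_i^{−1/d})^p] is finite for i ≥ i_0, and the series ∑_{i=i_0}^∞ E[|ln Γ_i|^p (Γ_i^{−1/c} + Γ_i^{−1/d})^p] converges. -/
/-!
Write `g x = |log x| ^ p * (x ^ (-1/c) + x ^ (-1/d)) ^ p` and fix `ε > 0` with `p/c + ε < i₀` and
`1 < p/d - ε`. Absorbing the logarithm into an `ε`-th power, `g x ≲ x ^ (-(p/c + ε))` on `(0, 1]`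
and `g x ≲ x ^ (-(p/d - ε))` on `[1, ∞)`. Near zero, independence gives the small-ball bound
`P(Γᵢ ≤ u) ≤ (1 - e⁻ᵘ) ^ i ≤ (1 - e⁻¹) ^ (i - i₀) * u ^ i₀`, so by the layer-cake formula
`E[Γᵢ ^ (-(p/c + ε)); Γᵢ ≤ 1]` decays geometrically. Away from zero, with `q = p/d - ε`,
`E[Γᵢ ^ (-q); Γᵢ > 1] ≤ P(Γᵢ ≤ i/2) + (i/2) ^ (-q)`, and the Chernoff bound with
`E[e^(-Eⱼ)] = 1/2` gives `P(Γᵢ ≤ i/2) ≤ (√e/2) ^ i`. Both bounds are summable because `q > 1`.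
-/

open MeasureTheory ProbabilityTheory Filter Set Real

lemma abs_log_rpow_le_of_one_le {p ε x : ℝ} (hp : 0 < p) (hε : 0 < ε) (hx : 1 ≤ x) :
    |log x| ^ p ≤ (p / ε) ^ p * x ^ ε := by
  have hx0 : 0 ≤ x := zero_le_one.trans hx
  have hlog : |log x| ≤ p / ε * x ^ (ε / p) := by
    rw [abs_of_nonneg (log_nonneg hx)]
    calc log x ≤ x ^ (ε / p) / (ε / p) := log_le_rpow_div hx0 (by positivity)
      _ = p / ε * x ^ (ε / p) := by field_simp
  calc |log x| ^ p ≤ (p / ε * x ^ (ε / p)) ^ p := by gcongr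
    _ = (p / ε) ^ p * x ^ ε := by
      rw [mul_rpow (by positivity) (by positivity), ← rpow_mul hx0, div_mul_cancel₀ ε hp.ne']

lemma abs_log_rpow_le_of_le_one {p ε x : ℝ} (hp : 0 < p) (hε : 0 < ε) (hx : 0 < x)
    (hx1 : x ≤ 1) : |log x| ^ p ≤ (p / ε) ^ p * x ^ (-ε) := by
  have := abs_log_rpow_le_of_one_le hp hε ((one_le_inv₀ hx).mpr hx1)
  rwa [log_inv, abs_neg, inv_rpow hx.le, ← rpow_neg hx.le] at this

lemma abs_log_rpow_mul_rpow_add_le_of_le_one {c d p ε x : ℝ} (hc : 0 < c) (hcd : c ≤ d)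
    (hp : 0 < p) (hε : 0 < ε) (hx : 0 < x) (hx1 : x ≤ 1) :
    |log x| ^ p * (x ^ (-c⁻¹) + x ^ (-d⁻¹)) ^ p ≤ (2 * p / ε) ^ p * x ^ (-(p / c + ε)) := by
  have hsum : x ^ (-c⁻¹) + x ^ (-d⁻¹) ≤ 2 * x ^ (-c⁻¹) := by
    have := rpow_le_rpow_of_exponent_ge hx hx1 (neg_le_neg (inv_anti₀ hc hcd))
    linarith
  calc |log x| ^ p * (x ^ (-c⁻¹) + x ^ (-d⁻¹)) ^ p
      ≤ (p / ε) ^ p * x ^ (-ε) * (2 * x ^ (-c⁻¹)) ^ p := by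
        gcongr
        exact abs_log_rpow_le_of_le_one hp hε hx hx1
    _ = (2 * p / ε) ^ p * x ^ (-(p / c + ε)) := by
        rw [mul_rpow zero_le_two (by positivity), ← rpow_mul hx.le, mul_div_assoc,
          mul_rpow zero_le_two (by positivity),
          show -(p / c + ε) = -ε + -c⁻¹ * p by field_simp; ring, rpow_add hx]
        ring

lemma abs_log_rpow_mul_rpow_add_le_of_one_le {c d p ε x : ℝ} (hc : 0 < c) (hcd : c ≤ d)
    (hp : 0 < p) (hε : 0 < ε) (hx : 1 ≤ x) :
    |log x| ^ p * (x ^ (-c⁻¹) + x ^ (-d⁻¹)) ^ p ≤ (2 * p / ε) ^ p * x ^ (-(p / d - ε)) := by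
  have hx0 : 0 < x := zero_lt_one.trans_le hx
  have hsum : x ^ (-c⁻¹) + x ^ (-d⁻¹) ≤ 2 * x ^ (-d⁻¹) := by
    have := rpow_le_rpow_of_exponent_le hx (neg_le_neg (inv_anti₀ hc hcd))
    linarith
  calc |log x| ^ p * (x ^ (-c⁻¹) + x ^ (-d⁻¹)) ^ p
      ≤ (p / ε) ^ p * x ^ ε * (2 * x ^ (-d⁻¹)) ^ p := by
        gcongr
        exact abs_log_rpow_le_of_one_le hp hε hx
    _ = (2 * p / ε) ^ p * x ^ (-(p / d - ε)) := by
        have hd : d ≠ 0 := (hc.trans_le hcd).ne'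
        rw [mul_rpow zero_le_two (by positivity), ← rpow_mul hx0.le, mul_div_assoc,
          mul_rpow zero_le_two (by positivity),
          show -(p / d - ε) = ε + -d⁻¹ * p by field_simp; ring, rpow_add hx0]
        ring

section NegativeMoments

variable {Ω : Type*} [MeasurableSpace Ω] {μ : Measure Ω} {X : Ω → ℝ}

lemma lintegral_rpow_neg_le_of_measure_le_le (hXm : Measurable X) (hX : ∀ᵐ ω ∂μ, 0 < X ω)
    {C a q : ℝ} (hC : 0 ≤ C) (hq : 0 < q) (hqa : q < a)
    (hsmall : ∀ u ∈ Ioc (0 : ℝ) 1, μ {ω | X ω ≤ u} ≤ ENNReal.ofReal (C * u ^ a)) :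
    ∫⁻ ω, ENNReal.ofReal (if X ω ≤ 1 then X ω ^ (-q) else 0) ∂μ
      ≤ ENNReal.ofReal (C * (a / (a - q))) := by
  set f : Ω → ℝ := fun ω => if X ω ≤ 1 then X ω ^ (-q) else 0 with hf
  have hfm : Measurable f :=
    Measurable.ite (measurableSet_le hXm measurable_const) (hXm.pow_const _) measurable_const
  have hf0 : 0 ≤ᵐ[μ] f := by
    filter_upwards [hX] with ω hω
    simp only [hf, Pi.zero_apply]
    split_ifs <;> positivity
  have hsupp : ∀ ω, 0 < f ω → X ω ≤ 1 ∧ f ω = X ω ^ (-q) := by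
    intro ω h
    simp only [hf] at h ⊢
    split_ifs at h ⊢ with h1
    exacts [⟨h1, rfl⟩, (lt_irrefl 0 h).elim]
  have hnear : ∀ t ∈ Ioc (0 : ℝ) 1, μ {ω | t < f ω} ≤ ENNReal.ofReal C := by
    intro t ht
    have hsub : {ω | t < f ω} ⊆ {ω | X ω ≤ 1} := fun ω hω => (hsupp ω (ht.1.trans hω)).1
    simpa using (measure_mono hsub).trans (hsmall 1 ⟨one_pos, le_rfl⟩)
  have hfar : ∀ t ∈ Ioi (1 : ℝ), μ {ω | t < f ω} ≤ ENNReal.ofReal (C * t ^ (-(a / q))) := by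
    intro t (ht : 1 < t)
    have ht0 : 0 < t := one_pos.trans ht
    have hqinv : -q⁻¹ < 0 := neg_neg_iff_pos.mpr (inv_pos.mpr hq)
    have hsub : {ω | t < f ω} ≤ᵐ[μ] {ω | X ω ≤ t ^ (-q⁻¹)} := by
      filter_upwards [hX] with ω hω (hlt : t < f ω)
      rw [(hsupp ω (ht0.trans hlt)).2] at hlt
      have := rpow_lt_rpow_of_neg ht0 hlt hqinv
      rw [← rpow_mul hω.le, show -q * -q⁻¹ = 1 by field_simp, rpow_one] at this
      exact this.le
    refine (measure_mono_ae hsub).trans ((hsmall _ ⟨by positivity,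
      rpow_le_one_of_one_le_of_nonpos ht.le hqinv.le⟩).trans (le_of_eq ?_))
    rw [← rpow_mul ht0.le]
    congr 3
    ring
  have hexp : -(a / q) < -1 := by rw [neg_lt_neg_iff, one_lt_div hq]; exact hqa
  have hint : IntegrableOn (fun t : ℝ => C * t ^ (-(a / q))) (Ioi 1) :=
    (integrableOn_Ioi_rpow_of_lt hexp one_pos).const_mul C
  have hint0 : 0 ≤ᵐ[volume.restrict (Ioi 1)] fun t : ℝ => C * t ^ (-(a / q)) :=
    (ae_restrict_iff' measurableSet_Ioi).mpr (ae_of_all _ fun t (ht : 1 < t) =>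
      mul_nonneg hC (rpow_nonneg (zero_le_one.trans ht.le) _))
  rw [lintegral_eq_lintegral_meas_lt μ hf0 hfm.aemeasurable, ← Ioc_union_Ioi_eq_Ioi zero_le_one,
    lintegral_union measurableSet_Ioi (Ioc_disjoint_Ioi le_rfl)]
  calc (∫⁻ t in Ioc 0 1, μ {ω | t < f ω}) + ∫⁻ t in Ioi 1, μ {ω | t < f ω}
      ≤ (∫⁻ t in Ioc 0 1, ENNReal.ofReal C)
          + ∫⁻ t in Ioi 1, ENNReal.ofReal (C * t ^ (-(a / q))) :=
        add_le_add (setLIntegral_mono' measurableSet_Ioc hnear)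
          (setLIntegral_mono' measurableSet_Ioi hfar)
    _ = ENNReal.ofReal C + ENNReal.ofReal (C * (q / (a - q))) := by
        rw [setLIntegral_const, Real.volume_Ioc, sub_zero, ENNReal.ofReal_one, mul_one,
          ← ofReal_integral_eq_lintegral_ofReal hint hint0, integral_const_mul,
          integral_Ioi_rpow_of_lt hexp one_pos, one_rpow,
          show -(a / q) + 1 = -((a - q) / q) by field_simp; ring, neg_div_neg_eq, one_div_div]
    _ = ENNReal.ofReal (C * (a / (a - q))) := by
        have haq : 0 < a - q := by linarith
        rw [← ENNReal.ofReal_add hC (by positivity)]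
        congr 1
        field_simp
        ring

lemma lintegral_rpow_neg_le_measure_add [IsProbabilityMeasure μ] (hXm : Measurable X)
    {q M : ℝ} (hq : 0 ≤ q) (hM : 0 < M) :
    ∫⁻ ω, ENNReal.ofReal (if 1 < X ω then X ω ^ (-q) else 0) ∂μ
      ≤ μ {ω | X ω ≤ M} + ENNReal.ofReal (M ^ (-q)) := by
  have hpt : ∀ ω, ENNReal.ofReal (if 1 < X ω then X ω ^ (-q) else 0)
      ≤ {ω | X ω ≤ M}.indicator 1 ω + ENNReal.ofReal (M ^ (-q)) := by
    intro ω
    split_ifs with h1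
    · by_cases hM' : X ω ≤ M
      · rw [indicator_of_mem (s := {ω | X ω ≤ M}) hM', Pi.one_apply]
        exact le_add_right (ENNReal.ofReal_le_one.mpr
          (rpow_le_one_of_one_le_of_nonpos h1.le (neg_nonpos.mpr hq)))
      · exact le_add_left (ENNReal.ofReal_le_ofReal
          (rpow_le_rpow_of_nonpos hM (not_le.mp hM').le (neg_nonpos.mpr hq)))
    · simp
  calc _ ≤ ∫⁻ ω, {ω | X ω ≤ M}.indicator 1 ω + ENNReal.ofReal (M ^ (-q)) ∂μ := lintegral_mono hpt
    _ = μ {ω | X ω ≤ M} + ENNReal.ofReal (M ^ (-q)) := by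
        rw [lintegral_add_right _ measurable_const,
          lintegral_indicator_one (measurableSet_le hXm measurable_const), lintegral_const,
          measure_univ, mul_one]

end NegativeMoments

lemma mgf_expMeasure {r t : ℝ} (hr : 0 < r) (ht : t < r) :
    mgf id (expMeasure r) t = r / (r - t) := by
  have hdens : ∀ x, (gammaPDF 1 r x).toReal * exp (t * x)
      = (Ici 0).indicator (fun x => r * exp ((t - r) * x)) x := by
    intro x
    simp only [gammaPDF, gammaPDFReal, indicator, mem_Ici]
    split_ifs with hx
    · rw [ENNReal.toReal_ofReal (by positivity)]
      simp only [rpow_one, Gamma_one, div_one, sub_self, rpow_zero, mul_one]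
      rw [mul_assoc, ← Real.exp_add]; ring_nf
    · simp
  rw [mgf, expMeasure, gammaMeasure,
    integral_withDensity_eq_integral_toReal_smul (f := gammaPDF 1 r)
      (measurable_gammaPDFReal 1 r).ennreal_ofReal (ae_of_all _ fun _ => ENNReal.ofReal_lt_top)]
  simp_rw [id, smul_eq_mul, hdens]
  rw [integral_indicator measurableSet_Ici, integral_Ici_eq_integral_Ioi, integral_const_mul,
    integral_exp_mul_Ioi (by linarith), mul_zero, Real.exp_zero, ← neg_sub r t, div_neg, neg_div,
    neg_neg, mul_one_div]

section ExponentialLaw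

variable {Ω : Type*} [MeasurableSpace Ω] {μ : Measure Ω} {X : Ω → ℝ} {r : ℝ}

lemma measure_setOf_le_of_map_eq_expMeasure (hXm : Measurable X) (hr : 0 < r)
    (hX : μ.map X = expMeasure r) {u : ℝ} (hu : 0 ≤ u) :
    μ {ω | X ω ≤ u} = ENNReal.ofReal (1 - exp (-(r * u))) := by
  have := isProbabilityMeasure_expMeasure hr
  rw [show {ω | X ω ≤ u} = X ⁻¹' Iic u from rfl, ← Measure.map_apply hXm measurableSet_Iic, hX,
    ← ofReal_cdf, cdf_expMeasure_eq hr, if_pos hu]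

lemma ae_pos_of_map_eq_expMeasure (hXm : Measurable X) (hr : 0 < r)
    (hX : μ.map X = expMeasure r) : ∀ᵐ ω ∂μ, 0 < X ω := by
  rw [ae_iff]
  simpa [not_lt] using measure_setOf_le_of_map_eq_expMeasure hXm hr hX le_rfl

lemma mgf_of_map_eq_expMeasure (hXm : Measurable X) (hr : 0 < r)
    (hX : μ.map X = expMeasure r) {t : ℝ} (ht : t < r) : mgf X μ t = r / (r - t) := by
  rw [← mgf_id_map hXm.aemeasurable, hX, mgf_expMeasure hr ht]

end ExponentialLaw

lemma ProbabilityTheory.iIndepFun.measure_sum_le_le_prod {Ω ι : Type*} [MeasurableSpace Ω]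
    {μ : Measure Ω} {X : ι → Ω → ℝ} (hX : iIndepFun X μ) (s : Finset ι)
    (hnn : ∀ j ∈ s, 0 ≤ᵐ[μ] X j) (u : ℝ) :
    μ {ω | ∑ j ∈ s, X j ω ≤ u} ≤ ∏ j ∈ s, μ {ω | X j ω ≤ u} := by
  have hsub : {ω | ∑ j ∈ s, X j ω ≤ u} ≤ᵐ[μ] ⋂ j ∈ s, X j ⁻¹' Iic u := by
    filter_upwards [(eventually_all_finset s).mpr hnn] with ω hω (hsum : ∑ j ∈ s, X j ω ≤ u)
    exact mem_iInter₂.mpr fun j hj => (Finset.single_le_sum hω hj).trans hsum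
  exact (measure_mono_ae hsub).trans_eq
    (hX.meas_biInter fun j _ => ⟨Iic u, measurableSet_Iic, rfl⟩)

section ArrivalTimes

variable {Ω : Type*} [MeasurableSpace Ω] {μ : Measure Ω} {E : ℕ → Ω → ℝ}

lemma ae_pos_sum_Icc (hmE : ∀ j, Measurable (E j))
    (hEexp : ∀ j, 1 ≤ j → μ.map (E j) = expMeasure 1) {i : ℕ} (hi : 1 ≤ i) :
    ∀ᵐ ω ∂μ, 0 < ∑ j ∈ Finset.Icc 1 i, E j ω := by
  have hpos := (eventually_all_finset (Finset.Icc 1 i)).mpr fun j hj =>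
    ae_pos_of_map_eq_expMeasure (hmE j) one_pos (hEexp j (Finset.mem_Icc.mp hj).1)
  filter_upwards [hpos] with ω hω
  exact Finset.sum_pos hω ⟨1, Finset.mem_Icc.mpr ⟨le_rfl, hi⟩⟩

lemma measure_sum_Icc_le_le_pow (hmE : ∀ j, Measurable (E j))
    (hEexp : ∀ j, 1 ≤ j → μ.map (E j) = expMeasure 1) (hIndep : iIndepFun E μ) (i : ℕ)
    {u : ℝ} (hu : 0 ≤ u) :
    μ {ω | ∑ j ∈ Finset.Icc 1 i, E j ω ≤ u} ≤ ENNReal.ofReal ((1 - exp (-u)) ^ i) := by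
  calc μ {ω | ∑ j ∈ Finset.Icc 1 i, E j ω ≤ u}
      ≤ ∏ j ∈ Finset.Icc 1 i, μ {ω | E j ω ≤ u} :=
        hIndep.measure_sum_le_le_prod _ (fun j hj =>
          (ae_pos_of_map_eq_expMeasure (hmE j) one_pos (hEexp j (Finset.mem_Icc.mp hj).1)).mono
            fun _ h => h.le) u
    _ = ∏ j ∈ Finset.Icc 1 i, ENNReal.ofReal (1 - exp (-u)) := Finset.prod_congr rfl fun j hj => by
        rw [measure_setOf_le_of_map_eq_expMeasure (hmE j) one_pos
          (hEexp j (Finset.mem_Icc.mp hj).1) hu, one_mul]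
    _ = ENNReal.ofReal ((1 - exp (-u)) ^ i) := by
        rw [Finset.prod_const, Nat.card_Icc, add_tsub_cancel_right,
          ENNReal.ofReal_pow (by linarith [exp_le_one_iff.mpr (neg_nonpos.mpr hu)])]

lemma measure_sum_Icc_le_le_of_le_one (hmE : ∀ j, Measurable (E j))
    (hEexp : ∀ j, 1 ≤ j → μ.map (E j) = expMeasure 1) (hIndep : iIndepFun E μ) {n i : ℕ}
    (hni : n ≤ i) {u : ℝ} (hu : 0 ≤ u) (hu1 : u ≤ 1) :
    μ {ω | ∑ j ∈ Finset.Icc 1 i, E j ω ≤ u}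
      ≤ ENNReal.ofReal ((1 - exp (-1)) ^ (i - n) * u ^ (n : ℝ)) := by
  have h0 : 0 ≤ 1 - exp (-u) := by linarith [exp_le_one_iff.mpr (neg_nonpos.mpr hu)]
  refine (measure_sum_Icc_le_le_pow hmE hEexp hIndep i hu).trans (ENNReal.ofReal_le_ofReal ?_)
  rw [rpow_natCast, ← Nat.sub_add_cancel hni, pow_add, Nat.add_sub_cancel]
  have h1 : 1 - exp (-u) ≤ 1 - exp (-1) := by linarith [exp_le_exp.mpr (neg_le_neg hu1)]
  have h2 : 1 - exp (-u) ≤ u := by linarith [add_one_le_exp (-u)]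
  exact mul_le_mul (pow_le_pow_left₀ h0 h1 _) (pow_le_pow_left₀ h0 h2 _) (pow_nonneg h0 _)
    (pow_nonneg (h0.trans h1) _)

lemma measure_sum_Icc_le_le_exp_div (hmE : ∀ j, Measurable (E j))
    (hEexp : ∀ j, 1 ≤ j → μ.map (E j) = expMeasure 1) (hIndep : iIndepFun E μ) (i : ℕ)
    (u : ℝ) :
    μ {ω | ∑ j ∈ Finset.Icc 1 i, E j ω ≤ u} ≤ ENNReal.ofReal (exp u / 2 ^ i) := by
  have := hIndep.isProbabilityMeasure
  have hmgf : mgf (fun ω => ∑ j ∈ Finset.Icc 1 i, E j ω) μ (-1) = 1 / 2 ^ i := by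
    simp_rw [← Finset.sum_apply]
    rw [hIndep.mgf_sum hmE, Finset.prod_congr rfl fun j hj =>
      mgf_of_map_eq_expMeasure (hmE j) one_pos (hEexp j (Finset.mem_Icc.mp hj).1) (by norm_num),
      Finset.prod_const, Nat.card_Icc, add_tsub_cancel_right, one_div_pow]
    norm_num
  have hnn : ∀ᵐ ω ∂μ, 0 ≤ ∑ j ∈ Finset.Icc 1 i, E j ω := by
    rcases Nat.eq_zero_or_pos i with rfl | hi
    · simp
    · exact (ae_pos_sum_Icc hmE hEexp hi).mono fun _ h => h.le
  have hint : Integrable (fun ω => exp (-1 * ∑ j ∈ Finset.Icc 1 i, E j ω)) μ := by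
    refine (integrable_const 1).mono' (by fun_prop) (hnn.mono fun ω h => ?_)
    rw [norm_of_nonneg (exp_pos _).le, exp_le_one_iff]
    linarith
  have hchernoff := measure_le_le_exp_mul_mgf u (by norm_num : (-1 : ℝ) ≤ 0) hint
  rw [hmgf, neg_neg, one_mul, mul_one_div] at hchernoff
  rw [← ofReal_measureReal]
  exact ENNReal.ofReal_le_ofReal hchernoff

lemma lintegral_sum_Icc_rpow_neg_of_le_one_le (hmE : ∀ j, Measurable (E j))
    (hEexp : ∀ j, 1 ≤ j → μ.map (E j) = expMeasure 1) (hIndep : iIndepFun E μ) {n i : ℕ}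
    (hni : n ≤ i) {q : ℝ} (hq : 0 < q) (hqn : q < n) :
    ∫⁻ ω, ENNReal.ofReal (if ∑ j ∈ Finset.Icc 1 i, E j ω ≤ 1
        then (∑ j ∈ Finset.Icc 1 i, E j ω) ^ (-q) else 0) ∂μ
      ≤ ENNReal.ofReal ((1 - exp (-1)) ^ (i - n) * (n / (n - q))) := by
  have hi : 1 ≤ i := (Nat.cast_pos.mp (hq.trans hqn)).trans_le hni
  exact lintegral_rpow_neg_le_of_measure_le_le (by fun_prop) (ae_pos_sum_Icc hmE hEexp hi)
    (pow_nonneg (sub_nonneg.mpr (exp_le_one_iff.mpr (by norm_num))) _) hq hqn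
    fun u hu => measure_sum_Icc_le_le_of_le_one hmE hEexp hIndep hni hu.1.le hu.2

lemma lintegral_sum_Icc_rpow_neg_of_one_lt_le (hmE : ∀ j, Measurable (E j))
    (hEexp : ∀ j, 1 ≤ j → μ.map (E j) = expMeasure 1) (hIndep : iIndepFun E μ) {i : ℕ}
    (hi : 1 ≤ i) {q : ℝ} (hq : 0 ≤ q) :
    ∫⁻ ω, ENNReal.ofReal (if 1 < ∑ j ∈ Finset.Icc 1 i, E j ω
        then (∑ j ∈ Finset.Icc 1 i, E j ω) ^ (-q) else 0) ∂μ
      ≤ ENNReal.ofReal ((exp (1 / 2) / 2) ^ i + 2 ^ q * (i : ℝ) ^ (-q)) := by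
  have := hIndep.isProbabilityMeasure
  have hi0 : (0 : ℝ) < i := by exact_mod_cast hi
  refine (lintegral_rpow_neg_le_measure_add (by fun_prop) hq (M := i / 2) (by positivity)).trans ?_
  rw [ENNReal.ofReal_add (by positivity) (by positivity)]
  gcongr
  · refine (measure_sum_Icc_le_le_exp_div hmE hEexp hIndep i _).trans_eq ?_
    rw [div_pow, ← exp_nat_mul, mul_one_div]
  · rw [div_rpow hi0.le zero_le_two, rpow_neg zero_le_two, div_inv_eq_mul, mul_comm]

end ArrivalTimes

lemma lintegral_abs_log_rpow_mul_rpow_add_le {Ω : Type*} [MeasurableSpace Ω] {μ : Measure Ω}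
    {X : Ω → ℝ} (hXm : Measurable X) (hX : ∀ᵐ ω ∂μ, 0 < X ω) {c d p ε : ℝ} (hc : 0 < c)
    (hcd : c ≤ d) (hp : 0 < p) (hε : 0 < ε) :
    ∫⁻ ω, ENNReal.ofReal (|log (X ω)| ^ p * (X ω ^ (-c⁻¹) + X ω ^ (-d⁻¹)) ^ p) ∂μ
      ≤ ENNReal.ofReal ((2 * p / ε) ^ p)
          * ((∫⁻ ω, ENNReal.ofReal (if X ω ≤ 1 then X ω ^ (-(p / c + ε)) else 0) ∂μ)
            + ∫⁻ ω, ENNReal.ofReal (if 1 < X ω then X ω ^ (-(p / d - ε)) else 0) ∂μ) := by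
  have hf₁ : Measurable fun ω => ENNReal.ofReal (if X ω ≤ 1 then X ω ^ (-(p / c + ε)) else 0) :=
    (Measurable.ite (measurableSet_le hXm measurable_const) (hXm.pow_const _)
      measurable_const).ennreal_ofReal
  rw [← lintegral_add_left hf₁, ← lintegral_const_mul' _ _ ENNReal.ofReal_ne_top]
  refine lintegral_mono_ae (hX.mono fun ω hω => ?_)
  rw [← ENNReal.ofReal_add (by positivity) (by positivity), ← ENNReal.ofReal_mul (by positivity)]
  refine ENNReal.ofReal_le_ofReal ?_
  split_ifs with h₁ h₂ h₂
  · exact absurd h₂ h₁.not_gt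
  · simpa using abs_log_rpow_mul_rpow_add_le_of_le_one hc hcd hp hε hω h₁
  · simpa using abs_log_rpow_mul_rpow_add_le_of_one_le hc hcd hp hε h₂.le
  · exact absurd (not_le.mp h₁) h₂

lemma integrable_and_summable_integral_of_lintegral_le {Ω : Type*} [MeasurableSpace Ω]
    {μ : Measure Ω} {f : ℕ → Ω → ℝ} {b : ℕ → ℝ} {i₀ : ℕ}
    (hfm : ∀ i, i₀ ≤ i → AEStronglyMeasurable (f i) μ) (hf0 : ∀ i, i₀ ≤ i → 0 ≤ᵐ[μ] f i)
    (hle : ∀ i, i₀ ≤ i → ∫⁻ ω, ENNReal.ofReal (f i ω) ∂μ ≤ ENNReal.ofReal (b i))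
    (hb0 : ∀ i, 0 ≤ b i) (hb : Summable b) :
    (∀ i, i₀ ≤ i → Integrable (f i) μ) ∧
      Summable fun i => if i₀ ≤ i then ∫ ω, f i ω ∂μ else 0 := by
  refine ⟨fun i hi => ⟨hfm i hi, ?_⟩, hb.of_nonneg_of_le (fun i => ?_) (fun i => ?_)⟩
  · rw [hasFiniteIntegral_iff_ofReal (hf0 i hi)]
    exact (hle i hi).trans_lt ENNReal.ofReal_lt_top
  · split_ifs with hi
    exacts [integral_nonneg_of_ae (hf0 i hi), le_rfl]
  · split_ifs with hi
    · rw [integral_eq_lintegral_of_nonneg_ae (hf0 i hi) (hfm i hi)]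
      exact ENNReal.toReal_le_of_le_ofReal (hb0 i) (hle i hi)
    · exact hb0 i

theorem stmt14_general
    {Ω : Type*} [MeasureSpace Ω]
    (E Γ : ℕ → Ω → ℝ)
    (hmE : ∀ i, Measurable (E i))
    (hEexp : ∀ i, 1 ≤ i → Measure.map (E i) ℙ = expMeasure 1)
    (hIndep : iIndepFun E ℙ)
    (hΓ : ∀ i ω, Γ i ω = ∑ j ∈ Finset.Icc 1 i, E j ω)
    (c d p : ℝ) (hc : 0 < c) (hcd : c ≤ d) (hp : p ∈ Ioo d 2)
    (i₀ : ℕ) (hi₀ : p / c < (i₀ : ℝ)) :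
    (∀ i : ℕ, i₀ ≤ i → Integrable
        (fun ω => |Real.log (Γ i ω)| ^ p * (Γ i ω ^ (-c⁻¹) + Γ i ω ^ (-d⁻¹)) ^ p) ℙ) ∧
      Summable (fun i : ℕ =>
        if i₀ ≤ i then
          ∫ ω, |Real.log (Γ i ω)| ^ p * (Γ i ω ^ (-c⁻¹) + Γ i ω ^ (-d⁻¹)) ^ p ∂ℙ
        else 0) := by
  obtain rfl : Γ = fun i ω => ∑ j ∈ Finset.Icc 1 i, E j ω := funext fun i => funext (hΓ i)
  have hd : 0 < d := hc.trans_le hcd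
  have hp0 : 0 < p := hd.trans hp.1
  obtain ⟨ε, hε, hεc, hεd⟩ : ∃ ε : ℝ, 0 < ε ∧ p / c + ε < i₀ ∧ 1 < p / d - ε := by
    have hpd : 1 < p / d := (one_lt_div hd).mpr hp.1
    refine ⟨min (i₀ - p / c) (p / d - 1) / 2, half_pos (lt_min (by linarith) (by linarith)), ?_, ?_⟩
    all_goals linarith [min_le_left (i₀ - p / c) (p / d - 1), min_le_right (i₀ - p / c) (p / d - 1)]
  have hi₀1 : 1 ≤ i₀ := Nat.cast_pos.mp ((div_pos hp0 hc).trans hi₀)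
  have hi₀ε : 0 < (i₀ : ℝ) - (p / c + ε) := by linarith
  have hβ : 0 < 1 - exp (-1) := sub_pos.mpr (exp_lt_one_iff.mpr (by norm_num))
  have hr : exp (1 / 2) / 2 < 1 := by
    have := exp_bound_div_one_sub_of_interval' (x := 1 / 2) (by norm_num) (by norm_num)
    rw [div_lt_one two_pos]; linarith
  refine integrable_and_summable_integral_of_lintegral_le (i₀ := i₀)
    (b := fun i => (2 * p / ε) ^ p * ((1 - exp (-1)) ^ (i - i₀) * (i₀ / (i₀ - (p / c + ε)))
      + ((exp (1 / 2) / 2) ^ i + 2 ^ (p / d - ε) * (i : ℝ) ^ (-(p / d - ε)))))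
    (fun i _ => by fun_prop) (fun i hi => ?_) (fun i hi => ?_) (fun i => by positivity) ?_
  · filter_upwards [ae_pos_sum_Icc hmE hEexp (hi₀1.trans hi)] with ω hω
    positivity
  · refine (lintegral_abs_log_rpow_mul_rpow_add_le (by fun_prop)
      (ae_pos_sum_Icc hmE hEexp (hi₀1.trans hi)) hc hcd hp0 hε).trans ?_
    rw [ENNReal.ofReal_mul (by positivity), ENNReal.ofReal_add (by positivity) (by positivity)]
    gcongr
    exacts [lintegral_sum_Icc_rpow_neg_of_le_one_le hmE hEexp hIndep hi (by positivity) hεc,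
      lintegral_sum_Icc_rpow_neg_of_one_lt_le hmE hEexp hIndep (hi₀1.trans hi) (by linarith)]
  · refine ((Summable.mul_right _ ?_).add ((summable_geometric_of_lt_one (by positivity) hr).add
      ((Real.summable_nat_rpow.mpr (by linarith)).mul_left _))).mul_left _
    exact (summable_nat_add_iff i₀).mp
      (by simpa using summable_geometric_of_lt_one hβ.le (sub_lt_self _ (exp_pos _)))

/-- for `0 < c ≤ d < 2`, `p ∈ (d,2)` and `(Γ_i)` the arrival times of a unit-rate
Poisson process, for every integer `i₀ > p/c` the expectations
`E[|ln Γ_i|^p (Γ_i^{-1/c} + Γ_i^{-1/d})^p]` are finite for `i ≥ i₀` and their series over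
`i ≥ i₀` converges. -/
theorem stmt14
    {Ω : Type*} [MeasureSpace Ω] [IsProbabilityMeasure (ℙ : Measure Ω)]
    (E Γ : ℕ → Ω → ℝ)
    (hmE : ∀ i, Measurable (E i))
    (hEexp : ∀ i, 1 ≤ i → Measure.map (E i) ℙ = expMeasure 1)
    (hIndep : iIndepFun E ℙ)
    (hΓ : ∀ i ω, Γ i ω = ∑ j ∈ Finset.Icc 1 i, E j ω)
    (c d p : ℝ) (hc : 0 < c) (hcd : c ≤ d) (hd2 : d < 2) (hp : p ∈ Ioo d 2)
    (i₀ : ℕ) (hi₀ : p / c < (i₀ : ℝ)) :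
    (∀ i : ℕ, i₀ ≤ i → Integrable
        (fun ω => |Real.log (Γ i ω)| ^ p * (Γ i ω ^ (-c⁻¹) + Γ i ω ^ (-d⁻¹)) ^ p) ℙ) ∧
      Summable (fun i : ℕ =>
        if i₀ ≤ i then
          ∫ ω, |Real.log (Γ i ω)| ^ p * (Γ i ω ^ (-c⁻¹) + Γ i ω ^ (-d⁻¹)) ^ p ∂ℙ
        else 0) :=
  stmt14_general E Γ hmE hEexp hIndep hΓ c d p hc hcd hp i₀ hi₀
end
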